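/- There exists a constant $C>0$ such that for all complex numbers $z$, the analytic continuation of the standard normal distribution function satisfies $|\Phi(z)| \le C\,\max\{1, e^{-\Re(z^2)/2}\}$. -/

import Mathlib

/-!
Termwise differentiation gives `Φ' = φ` with `φ(w) = e^{-w²/2}/√(2π)`, so differences of `Φ` are
integrals of `φ` along segments. For `Re z ≥ 0`, `Φ(z + T) → 1` as `T → ∞` (on the vertical
segment from `Re z + T` to `z + T`, `|φ| ≤ e^{(Im(z)² - (Re z + T)²)/2}/√(2π)`), hence
`1 - Φ(z) = ∫₀^∞ φ(z + t) dt`; as `Re((z + t)²) ≥ Re(z²) + t²` for `t ≥ 0`, this is at most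
`e^{-Re(z²)/2}/2`. The half plane `Re z < 0` follows from `Φ(-z) = 1 - Φ(z)`.
-/

open scoped Real

/-- The analytic continuation of the standard normal distribution function,
`Φ(z) = 1/2 + (2π)^{-1/2} ∑ₙ (-1)ⁿ z^{2n+1} / ((2n+1) 2ⁿ n!)`. -/
noncomputable def PhiC (z : ℂ) : ℂ :=
  1 / 2 + (Real.sqrt (2 * π) : ℂ)⁻¹ *
    ∑' n : ℕ, ((-1 : ℂ) ^ n / (((2 * n + 1 : ℕ) : ℂ) * 2 ^ n * (n.factorial : ℂ)))
      * z ^ (2 * n + 1)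

open Complex MeasureTheory Filter Topology Set

noncomputable def PhiC.term (n : ℕ) (z : ℂ) : ℂ :=
  (-1 : ℂ) ^ n / (((2 * n + 1 : ℕ) : ℂ) * 2 ^ n * (n.factorial : ℂ)) * z ^ (2 * n + 1)

noncomputable def gaussianDensity (z : ℂ) : ℂ :=
  (Real.sqrt (2 * π) : ℂ)⁻¹ * exp (-z ^ 2 / 2)

lemma PhiC.hasDerivAt_term (n : ℕ) (z : ℂ) :
    HasDerivAt (term n) ((-z ^ 2 / 2) ^ n / n.factorial) z := by
  refine ((hasDerivAt_pow (2 * n + 1) z).const_mul _).congr_deriv ?_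
  have h2n : ((2 * n + 1 : ℕ) : ℂ) ≠ 0 := Nat.cast_ne_zero.2 (by omega)
  rw [Nat.add_sub_cancel, div_pow, neg_pow, pow_mul]
  field_simp
  ring

lemma norm_neg_sq_div_two_pow_div_factorial_le {z : ℂ} {R : ℝ} (hz : ‖z‖ ≤ R) (n : ℕ) :
    ‖(-z ^ 2 / 2) ^ n / n.factorial‖ ≤ (R ^ 2 / 2) ^ n / n.factorial := by
  rw [norm_div, norm_pow, norm_div, norm_neg, norm_pow, Complex.norm_natCast, Complex.norm_ofNat]
  gcongr

theorem hasDerivAt_PhiC (z : ℂ) : HasDerivAt PhiC (gaussianDensity z) z := by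
  have hseries : HasDerivAt (fun w => ∑' n, PhiC.term n w)
      (∑' n, (-z ^ 2 / 2) ^ n / n.factorial) z :=
    hasDerivAt_tsum_of_isPreconnected (Real.summable_pow_div_factorial ((‖z‖ + 1) ^ 2 / 2))
      Metric.isOpen_ball (convex_ball 0 _).isPreconnected
      (fun n w _ => PhiC.hasDerivAt_term n w)
      (fun n w hw => norm_neg_sq_div_two_pow_div_factorial_le (mem_closedBall_zero_iff.1
        (Metric.ball_subset_closedBall hw)) n)
      (Metric.mem_ball_self (by positivity)) (by simp [PhiC.term]) (by simp)
  rw [gaussianDensity, exp_eq_exp_ℂ,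
    ← (NormedSpace.expSeries_div_hasSum_exp (-z ^ 2 / 2)).tsum_eq]
  exact (hseries.const_mul _).const_add _

lemma continuous_gaussianDensity : Continuous gaussianDensity := by
  unfold gaussianDensity; fun_prop

lemma norm_gaussianDensity (w : ℂ) :
    ‖gaussianDensity w‖ = (Real.sqrt (2 * π))⁻¹ * Real.exp (-(w ^ 2).re / 2) := by
  rw [gaussianDensity, norm_mul, norm_exp, norm_inv, norm_real,
    Real.norm_of_nonneg (by positivity)]
  simp [neg_div]

lemma gaussianDensity_ofReal (t : ℝ) :
    gaussianDensity t = ((Real.sqrt (2 * π))⁻¹ * Real.exp (-t ^ 2 / 2) : ℝ) := by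
  simp [gaussianDensity]

lemma integrableOn_exp_neg_sq_div_two_Ioi :
    IntegrableOn (fun t : ℝ => Real.exp (-t ^ 2 / 2)) (Ioi 0) := by
  simpa [neg_div, div_eq_inv_mul] using
    (integrable_exp_neg_mul_sq (by norm_num : (0 : ℝ) < 1 / 2)).integrableOn

lemma integral_exp_neg_sq_div_two_Ioi :
    ∫ t in Ioi (0 : ℝ), Real.exp (-t ^ 2 / 2) = Real.sqrt (2 * π) / 2 := by
  simpa [neg_div, div_eq_inv_mul] using integral_gaussian_Ioi (1 / 2)

lemma integral_exp_neg_sq_div_two_le {T : ℝ} (hT : 0 ≤ T) :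
    ∫ t in (0 : ℝ)..T, Real.exp (-t ^ 2 / 2) ≤ Real.sqrt (2 * π) / 2 := by
  rw [intervalIntegral.integral_of_le hT, ← integral_exp_neg_sq_div_two_Ioi]
  exact setIntegral_mono_set integrableOn_exp_neg_sq_div_two_Ioi
    (.of_forall fun t => (Real.exp_pos _).le) Ioc_subset_Ioi_self.eventuallyLE

lemma integrableOn_gaussianDensity_Ioi :
    IntegrableOn (fun t : ℝ => gaussianDensity t) (Ioi 0) := by
  simp_rw [gaussianDensity_ofReal]
  exact (integrableOn_exp_neg_sq_div_two_Ioi.const_mul _).ofReal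

lemma integral_gaussianDensity_Ioi : ∫ t in Ioi (0 : ℝ), gaussianDensity t = 1 / 2 := by
  simp_rw [gaussianDensity_ofReal]
  rw [integral_complex_ofReal, integral_const_mul, integral_exp_neg_sq_div_two_Ioi]
  field_simp
  norm_num

lemma PhiC_add_mul_sub_PhiC_add_mul (z w : ℂ) (a b : ℝ) :
    PhiC (z + b * w) - PhiC (z + a * w) = ∫ t in a..b, gaussianDensity (z + t * w) * w := by
  refine (intervalIntegral.integral_eq_sub_of_hasDerivAt
    (f := fun t : ℝ => PhiC (z + t * w)) (fun t _ => ?_) ?_).symm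
  · have := (hasDerivAt_PhiC _).comp (t : ℂ) (((hasDerivAt_id (t : ℂ)).mul_const w).const_add z)
    simpa using this.comp_ofReal
  · exact ((continuous_gaussianDensity.comp (by fun_prop)).mul continuous_const).intervalIntegrable
      _ _

lemma PhiC_zero : PhiC 0 = 1 / 2 := by
  simp [PhiC]

lemma PhiC_neg (z : ℂ) : PhiC (-z) = 1 - PhiC z := by
  simp_rw [PhiC, (odd_two_mul_add_one _).neg_pow, mul_neg, tsum_neg]
  ring

lemma tendsto_PhiC_ofReal_atTop : Tendsto (fun x : ℝ => PhiC x) atTop (𝓝 1) := by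
  have hPhi (x : ℝ) : PhiC x = 1 / 2 + ∫ t in (0 : ℝ)..x, gaussianDensity t := by
    simpa [PhiC_zero, sub_eq_iff_eq_add'] using PhiC_add_mul_sub_PhiC_add_mul 0 1 0 x
  have hint := intervalIntegral_tendsto_integral_Ioi 0 integrableOn_gaussianDensity_Ioi tendsto_id
  rw [integral_gaussianDensity_Ioi] at hint
  simpa only [hPhi, add_halves, id] using hint.const_add (1 / 2 : ℂ)

lemma re_ofReal_add_mul_I_sq (x s : ℝ) : (((x : ℂ) + s * I) ^ 2).re = x ^ 2 - s ^ 2 := by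
  simp [sq]

lemma re_add_ofReal_sq (z : ℂ) (t : ℝ) : ((z + t) ^ 2).re = (z ^ 2).re + 2 * t * z.re + t ^ 2 := by
  simp [sq]; ring

lemma norm_PhiC_add_mul_I_sub_le (x y : ℝ) :
    ‖PhiC (x + y * I) - PhiC x‖
      ≤ (Real.sqrt (2 * π))⁻¹ * Real.exp ((y ^ 2 - x ^ 2) / 2) * |y| := by
  have hseg := PhiC_add_mul_sub_PhiC_add_mul x I 0 y
  rw [ofReal_zero, zero_mul, add_zero] at hseg
  have hbound : ∀ s ∈ uIoc 0 y, ‖gaussianDensity (x + s * I) * I‖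
      ≤ (Real.sqrt (2 * π))⁻¹ * Real.exp ((y ^ 2 - x ^ 2) / 2) := fun s hs => by
    have hsy : s ^ 2 ≤ y ^ 2 := by
      rcases mem_uIoc.1 hs with ⟨h0, hy⟩ | ⟨hy, h0⟩ <;> nlinarith
    rw [norm_mul, norm_I, mul_one, norm_gaussianDensity, re_ofReal_add_mul_I_sq]
    gcongr
    linarith
  simpa [hseg] using intervalIntegral.norm_integral_le_of_norm_le_const hbound

lemma tendsto_PhiC_add_ofReal_atTop (z : ℂ) :
    Tendsto (fun T : ℝ => PhiC (z + T)) atTop (𝓝 1) := by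
  have hz (T : ℝ) : z + T = ((z.re + T : ℝ) : ℂ) + z.im * I := by
    apply Complex.ext <;> simp
  have hshift : Tendsto (fun T : ℝ => z.re + T) atTop atTop :=
    tendsto_atTop_add_const_left _ _ tendsto_id
  have hvert : Tendsto (fun T : ℝ => PhiC (z + T) - PhiC ((z.re + T : ℝ) : ℂ)) atTop (𝓝 0) := by
    refine squeeze_zero_norm (fun T => hz T ▸ norm_PhiC_add_mul_I_sub_le _ _) ?_
    have hexp : Tendsto (fun u : ℝ => Real.exp ((z.im ^ 2 - u ^ 2) / 2)) atTop (𝓝 0) := by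
      refine Real.tendsto_exp_atBot.comp (Tendsto.atBot_div_const two_pos ?_)
      simpa [sub_eq_add_neg] using tendsto_atBot_add_const_left _ (z.im ^ 2)
        (tendsto_neg_atTop_atBot.comp (tendsto_pow_atTop two_ne_zero))
    simpa using ((hexp.comp hshift).const_mul (Real.sqrt (2 * π))⁻¹).mul_const |z.im|
  simpa using hvert.add (tendsto_PhiC_ofReal_atTop.comp hshift)

lemma norm_PhiC_add_ofReal_sub_le {z : ℂ} (hz : 0 ≤ z.re) {T : ℝ} (hT : 0 ≤ T) :
    ‖PhiC (z + T) - PhiC z‖ ≤ 1 / 2 * Real.exp (-(z ^ 2).re / 2) := by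
  set c := (Real.sqrt (2 * π))⁻¹ * Real.exp (-(z ^ 2).re / 2)
  have hseg : PhiC (z + T) - PhiC z = ∫ t in (0 : ℝ)..T, gaussianDensity (z + t) := by
    simpa using PhiC_add_mul_sub_PhiC_add_mul z 1 0 T
  have hbound : ∀ t ∈ Ioc 0 T, ‖gaussianDensity (z + t)‖ ≤ c * Real.exp (-t ^ 2 / 2) :=
    fun t ht => by
      rw [norm_gaussianDensity, mul_assoc, ← Real.exp_add, re_add_ofReal_sq]
      gcongr
      nlinarith [ht.1]
  calc ‖PhiC (z + T) - PhiC z‖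
      ≤ ∫ t in (0 : ℝ)..T, c * Real.exp (-t ^ 2 / 2) := by
        rw [hseg]
        exact intervalIntegral.norm_integral_le_of_norm_le hT (.of_forall hbound)
          (Continuous.intervalIntegrable (by fun_prop) _ _)
    _ ≤ c * (Real.sqrt (2 * π) / 2) := by
        rw [intervalIntegral.integral_const_mul]
        gcongr
        exact integral_exp_neg_sq_div_two_le hT
    _ = 1 / 2 * Real.exp (-(z ^ 2).re / 2) := by
        simp only [c]
        field_simp

lemma norm_one_sub_PhiC_le {z : ℂ} (hz : 0 ≤ z.re) :
    ‖1 - PhiC z‖ ≤ 1 / 2 * Real.exp (-(z ^ 2).re / 2) :=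
  le_of_tendsto ((tendsto_PhiC_add_ofReal_atTop z).sub_const (PhiC z)).norm <|
    (eventually_ge_atTop 0).mono fun _ hT => norm_PhiC_add_ofReal_sub_le hz hT

lemma norm_PhiC_le (z : ℂ) : ‖PhiC z‖ ≤ 1 + 1 / 2 * Real.exp (-(z ^ 2).re / 2) := by
  rcases le_total 0 z.re with hz | hz
  · have h := norm_le_norm_add_norm_sub (1 : ℂ) (PhiC z)
    rw [norm_one] at h
    linarith [norm_one_sub_PhiC_le hz]
  · have h := norm_one_sub_PhiC_le (z := -z) (by simpa using hz)
    rw [PhiC_neg, sub_sub_cancel, neg_sq] at h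
    linarith

/-- There exists `C > 0` with `|Φ(z)| ≤ C max{1, e^{-Re(z²)/2}}` for all `z ∈ ℂ`. -/
theorem PhiC_bound :
    ∃ C : ℝ, 0 < C ∧ ∀ z : ℂ,
      ‖PhiC z‖ ≤ C * max 1 (Real.exp (-(z ^ 2).re / 2)) := by
  refine ⟨2, two_pos, fun z => ?_⟩
  have h1 := le_max_left 1 (Real.exp (-(z ^ 2).re / 2))
  have h2 := le_max_right 1 (Real.exp (-(z ^ 2).re / 2))
  linarith [norm_PhiC_le z]
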